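/- arXiv:1807.10338 — 2 statements merged into one kernel-verified Lean document; each statement's English description precedes it below -/
import Mathlib

section
/- For all a, b > 0, the variance of log(1−Y) under the Beta(a,b) distribution equals ψ₁(b) − ψ₁(a+b): ∫₀¹ (log(1−y) − (ψ(b) − ψ(a+b)))² · f_{a,b}(y) dy = ψ₁(b) − ψ₁(a+b). -/
/-!
Differentiating `B(a, t) = ∫₀¹ y^(a-1) (1-y)^(t-1) dy = Γ(a) Γ(t) / Γ(a+t)` under the integral
sign in `t` brings down one factor `log (1 - y)` per derivative, while `∂ₜ log B(a, t) =
ψ(t) - ψ(a+t)`. Hence the first two derivatives at `t = b` give `B · m` and `B · (m² + v)` with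
`m = ψ(b) - ψ(a+b)` and `v = ψ₁(b) - ψ₁(a+b)`, that is `E[log(1-Y)] = m` and
`E[log(1-Y)²] = m² + v`, so the variance is `v`.
-/

open MeasureTheory Real Set

noncomputable def digamma (x : ℝ) : ℝ := deriv Real.Gamma x / Real.Gamma x

noncomputable def trigamma (x : ℝ) : ℝ := deriv digamma x

noncomputable def betaDensity (a b y : ℝ) : ℝ :=
  y ^ (a - 1) * (1 - y) ^ (b - 1) / (Real.Gamma a * Real.Gamma b / Real.Gamma (a + b))

open ProbabilityTheory
open scoped Topology

-- `Γ` is holomorphic on the right half-plane, and `Real.Gamma` is its restriction to the real axis.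
theorem contDiffOn_Gamma_Ioi {n : WithTop ℕ∞} : ContDiffOn ℝ n Real.Gamma (Ioi 0) := by
  have hopen : IsOpen {z : ℂ | 0 < z.re} := isOpen_lt continuous_const Complex.continuous_re
  have hC : ContDiffOn ℂ n Complex.Gamma {z : ℂ | 0 < z.re} := by
    refine DifferentiableOn.contDiffOn (fun z hz => ?_) hopen
    refine (Complex.differentiableAt_Gamma z fun m hm => ?_).differentiableWithinAt
    have : (0 : ℝ) < -m := by simpa [hm] using hz
    linarith [(Nat.cast_nonneg m : (0 : ℝ) ≤ m)]
  intro x hx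
  have hx' : (x : ℂ) ∈ {z : ℂ | 0 < z.re} := by simpa using hx
  have := Complex.reCLM.contDiff.contDiffAt.comp x
    (((hC x hx').contDiffAt (hopen.mem_nhds hx')).restrict_scalars ℝ |>.comp x
      Complex.ofRealCLM.contDiff.contDiffAt)
  refine (this.congr_of_eventuallyEq ?_).contDiffWithinAt
  filter_upwards with y
  simp [Complex.Gamma_ofReal]

theorem contDiffOn_digamma_Ioi {n : WithTop ℕ∞} : ContDiffOn ℝ n digamma (Ioi 0) :=
  ((contDiffOn_Gamma_Ioi (n := n + 1)).deriv_of_isOpen isOpen_Ioi le_rfl).div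
    contDiffOn_Gamma_Ioi fun _ hx => (Real.Gamma_pos_of_pos hx).ne'

theorem hasDerivAt_Gamma_of_pos {x : ℝ} (hx : 0 < x) :
    HasDerivAt Real.Gamma (Real.Gamma x * digamma x) x := by
  rw [digamma, mul_div_cancel₀ _ (Real.Gamma_pos_of_pos hx).ne']
  exact ((contDiffOn_Gamma_Ioi (n := 1)).differentiableOn one_ne_zero
    |>.differentiableAt (isOpen_Ioi.mem_nhds hx)).hasDerivAt

theorem hasDerivAt_digamma {x : ℝ} (hx : 0 < x) : HasDerivAt digamma (trigamma x) x :=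
  ((contDiffOn_digamma_Ioi (n := 1)).differentiableOn one_ne_zero
    |>.differentiableAt (isOpen_Ioi.mem_nhds hx)).hasDerivAt

theorem hasDerivAt_beta_right {a t : ℝ} (ha : 0 < a) (ht : 0 < t) :
    HasDerivAt (beta a) (beta a t * (digamma t - digamma (a + t))) t := by
  have hat : 0 < a + t := by linarith
  have hsum : HasDerivAt (fun s => Real.Gamma (a + s)) (Real.Gamma (a + t) * digamma (a + t)) t :=
    (hasDerivAt_Gamma_of_pos hat).comp_const_add a t
  refine (((hasDerivAt_Gamma_of_pos ht).const_mul (Real.Gamma a)).div hsum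
    (Real.Gamma_pos_of_pos hat).ne').congr_deriv ?_
  rw [beta]
  field_simp

theorem integral_rpow_mul_one_sub_rpow {a t : ℝ} (ha : 0 < a) (ht : 0 < t) :
    ∫ y in Ioo (0 : ℝ) 1, y ^ (a - 1) * (1 - y) ^ (t - 1) = beta a t := by
  have hcpow : ∀ y ∈ uIcc (0 : ℝ) 1, (y : ℂ) ^ ((a : ℂ) - 1) * (1 - (y : ℂ)) ^ ((t : ℂ) - 1)
      = ((y ^ (a - 1) * (1 - y) ^ (t - 1) : ℝ) : ℂ) := by
    intro y hy
    rw [uIcc_of_le zero_le_one] at hy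
    push_cast [Complex.ofReal_cpow hy.1, Complex.ofReal_cpow (sub_nonneg.2 hy.2)]
    rfl
  rw [beta_eq_betaIntegralReal a t ha ht, Complex.betaIntegral,
    intervalIntegral.integral_congr hcpow, intervalIntegral.integral_ofReal, Complex.ofReal_re,
    intervalIntegral.integral_of_le zero_le_one, integral_Ioc_eq_integral_Ioo]

theorem integrableOn_rpow_mul_one_sub_rpow {a t : ℝ} (ha : 0 < a) (ht : 0 < t) :
    IntegrableOn (fun y : ℝ => y ^ (a - 1) * (1 - y) ^ (t - 1)) (Ioo 0 1) :=
  Integrable.of_integral_ne_zero <| by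
    rw [integral_rpow_mul_one_sub_rpow ha ht]; exact (beta_pos ha ht).ne'

theorem abs_log_pow_mul_rpow_le {s u : ℝ} (hs : 0 < s) (hu : u ∈ Ioc 0 1) (n : ℕ) :
    |log u| ^ n * u ^ s ≤ (n / s) ^ n := by
  rcases Nat.eq_zero_or_pos n with rfl | hn
  · simpa using rpow_le_one hu.1.le hu.2 hs.le
  have hn' : (0 : ℝ) < n := Nat.cast_pos.2 hn
  have key := abs_log_mul_self_rpow_lt u (s / n) hu.1 hu.2 (div_pos hs hn')
  calc |log u| ^ n * u ^ s = |log u * u ^ (s / n)| ^ n := by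
        rw [abs_mul, abs_of_pos (rpow_pos_of_pos hu.1 _), mul_pow, ← rpow_natCast (u ^ _),
          ← rpow_mul hu.1.le, div_mul_cancel₀ _ hn'.ne']
    _ ≤ (n / s) ^ n := by
        gcongr
        simpa using key.le

theorem abs_log_pow_mul_rpow_sub_one_le {s t u : ℝ} (hs : 0 < s) (hu : u ∈ Ioc 0 1) (n : ℕ) :
    |log u| ^ n * u ^ (t - 1) ≤ (n / s) ^ n * u ^ (t - s - 1) := by
  calc |log u| ^ n * u ^ (t - 1) = |log u| ^ n * u ^ s * u ^ (t - s - 1) := by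
        rw [mul_assoc, ← rpow_add hu.1]; ring_nf
    _ ≤ (n / s) ^ n * u ^ (t - s - 1) :=
        mul_le_mul_of_nonneg_right (abs_log_pow_mul_rpow_le hs hu n) (rpow_nonneg hu.1.le _)

theorem integrableOn_log_one_sub_pow_mul {a t : ℝ} (ha : 0 < a) (ht : 0 < t) (n : ℕ) :
    IntegrableOn (fun y : ℝ => log (1 - y) ^ n * (y ^ (a - 1) * (1 - y) ^ (t - 1))) (Ioo 0 1) := by
  refine Integrable.mono' ((integrableOn_rpow_mul_one_sub_rpow ha (half_pos ht)).const_mul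
    ((n / (t / 2)) ^ n)) (by fun_prop) ?_
  -- half of the exponent of `1 - y` absorbs the logarithmic singularity at `y = 1`
  filter_upwards [ae_restrict_mem measurableSet_Ioo] with y hy
  have hu : 1 - y ∈ Ioc 0 1 := ⟨by linarith [hy.2], by linarith [hy.1]⟩
  have hy0 : 0 ≤ y ^ (a - 1) := rpow_nonneg hy.1.le _
  calc ‖log (1 - y) ^ n * (y ^ (a - 1) * (1 - y) ^ (t - 1))‖
      = y ^ (a - 1) * (|log (1 - y)| ^ n * (1 - y) ^ (t - 1)) := by
        rw [norm_mul, norm_pow, norm_mul, norm_eq_abs, norm_of_nonneg hy0,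
          norm_of_nonneg (rpow_nonneg hu.1.le _)]
        ring
    _ ≤ y ^ (a - 1) * ((n / (t / 2)) ^ n * (1 - y) ^ (t - t / 2 - 1)) :=
        mul_le_mul_of_nonneg_left (abs_log_pow_mul_rpow_sub_one_le (half_pos ht) hu n) hy0
    _ = (n / (t / 2)) ^ n * (y ^ (a - 1) * (1 - y) ^ (t / 2 - 1)) := by
        rw [sub_half]; ring

noncomputable def logBetaMoment (n : ℕ) (a t : ℝ) : ℝ :=
  ∫ y in Ioo (0 : ℝ) 1, log (1 - y) ^ n * (y ^ (a - 1) * (1 - y) ^ (t - 1))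

theorem hasDerivAt_logBetaMoment {a t : ℝ} (ha : 0 < a) (ht : 0 < t) (n : ℕ) :
    HasDerivAt (logBetaMoment n a) (logBetaMoment (n + 1) a t) t := by
  have hmeas : ∀ (k : ℕ) (s : ℝ), AEStronglyMeasurable
      (fun y : ℝ => log (1 - y) ^ k * (y ^ (a - 1) * (1 - y) ^ (s - 1)))
      (volume.restrict (Ioo 0 1)) := fun _ _ => by fun_prop
  have hbound : ∀ᵐ y ∂volume.restrict (Ioo (0 : ℝ) 1), ∀ s ∈ Ioi (t / 2),
      ‖log (1 - y) ^ (n + 1) * (y ^ (a - 1) * (1 - y) ^ (s - 1))‖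
        ≤ ‖log (1 - y) ^ (n + 1) * (y ^ (a - 1) * (1 - y) ^ (t / 2 - 1))‖ := by
    filter_upwards [ae_restrict_mem measurableSet_Ioo] with y hy s hs
    have h0 : 0 < 1 - y := by linarith [hy.2]
    rw [norm_mul, norm_mul, norm_mul, norm_mul, norm_of_nonneg (rpow_nonneg h0.le _),
      norm_of_nonneg (rpow_nonneg h0.le _)]
    exact mul_le_mul_of_nonneg_left (mul_le_mul_of_nonneg_left
      (rpow_le_rpow_of_exponent_ge h0 (by linarith [hy.1]) (by linarith [hs.out])) (norm_nonneg _))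
      (norm_nonneg _)
  have hdiff : ∀ᵐ y ∂volume.restrict (Ioo (0 : ℝ) 1), ∀ s ∈ Ioi (t / 2),
      HasDerivAt (fun s => log (1 - y) ^ n * (y ^ (a - 1) * (1 - y) ^ (s - 1)))
        (log (1 - y) ^ (n + 1) * (y ^ (a - 1) * (1 - y) ^ (s - 1))) s := by
    filter_upwards [ae_restrict_mem measurableSet_Ioo] with y hy s _
    have h0 : 0 < 1 - y := by linarith [hy.2]
    refine (((((hasDerivAt_id' s).sub_const 1).const_rpow h0).const_mul (y ^ (a - 1))).const_mul
      (log (1 - y) ^ n)).congr_deriv ?_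
    ring
  exact (hasDerivAt_integral_of_dominated_loc_of_deriv_le (Ioi_mem_nhds (half_lt_self ht))
    (.of_forall (hmeas n)) (integrableOn_log_one_sub_pow_mul ha ht n) (hmeas (n + 1) t) hbound
    (integrableOn_log_one_sub_pow_mul ha (half_pos ht) (n + 1)).norm hdiff).2

theorem logBetaMoment_zero {a t : ℝ} (ha : 0 < a) (ht : 0 < t) :
    logBetaMoment 0 a t = beta a t := by
  simp only [logBetaMoment, pow_zero, one_mul]
  exact integral_rpow_mul_one_sub_rpow ha ht

theorem logBetaMoment_succ {a t : ℝ} (ha : 0 < a) (ht : 0 < t) (n : ℕ) :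
    logBetaMoment (n + 1) a t = deriv (logBetaMoment n a) t :=
  (hasDerivAt_logBetaMoment ha ht n).deriv.symm

theorem logBetaMoment_one {a t : ℝ} (ha : 0 < a) (ht : 0 < t) :
    logBetaMoment 1 a t = beta a t * (digamma t - digamma (a + t)) := by
  have hM : logBetaMoment 0 a =ᶠ[𝓝 t] beta a :=
    Filter.eventually_of_mem (Ioi_mem_nhds ht) fun s hs => logBetaMoment_zero ha hs
  rw [logBetaMoment_succ ha ht, hM.deriv_eq, (hasDerivAt_beta_right ha ht).deriv]

theorem logBetaMoment_two {a t : ℝ} (ha : 0 < a) (ht : 0 < t) :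
    logBetaMoment 2 a t = beta a t *
      ((digamma t - digamma (a + t)) ^ 2 + (trigamma t - trigamma (a + t))) := by
  have hM : logBetaMoment 1 a =ᶠ[𝓝 t] fun s => beta a s * (digamma s - digamma (a + s)) :=
    Filter.eventually_of_mem (Ioi_mem_nhds ht) fun s hs => logBetaMoment_one ha hs
  have hψ : HasDerivAt (fun s => digamma s - digamma (a + s)) (trigamma t - trigamma (a + t)) t :=
    (hasDerivAt_digamma ht).sub ((hasDerivAt_digamma (add_pos ha ht)).comp_const_add a t)
  have hd : HasDerivAt (fun s => beta a s * (digamma s - digamma (a + s)))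
      (beta a t * (digamma t - digamma (a + t)) * (digamma t - digamma (a + t))
        + beta a t * (trigamma t - trigamma (a + t))) t :=
    (hasDerivAt_beta_right ha ht).mul hψ
  rw [logBetaMoment_succ ha ht, hM.deriv_eq, hd.deriv]
  ring

theorem integral_sq_sub_mul_betaDensity {a b : ℝ} (ha : 0 < a) (hb : 0 < b) (c : ℝ) :
    ∫ y in Ioo (0 : ℝ) 1, (log (1 - y) - c) ^ 2 * betaDensity a b y =
      (logBetaMoment 2 a b - 2 * c * logBetaMoment 1 a b + c ^ 2 * logBetaMoment 0 a b) /
        beta a b := by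
  have hint := integrableOn_log_one_sub_pow_mul ha hb
  have hexpand : ∀ y : ℝ, (log (1 - y) - c) ^ 2 * betaDensity a b y =
      (log (1 - y) ^ 2 * (y ^ (a - 1) * (1 - y) ^ (b - 1))
        - 2 * c * (log (1 - y) ^ 1 * (y ^ (a - 1) * (1 - y) ^ (b - 1)))
        + c ^ 2 * (log (1 - y) ^ 0 * (y ^ (a - 1) * (1 - y) ^ (b - 1)))) / beta a b := by
    intro y
    rw [betaDensity, ← beta]
    ring
  simp_rw [hexpand]
  rw [integral_div, integral_add _ ((hint 0).const_mul _),
    integral_sub (hint 2) ((hint 1).const_mul _), integral_const_mul, integral_const_mul]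
  · rfl
  · exact (hint 2).sub ((hint 1).const_mul _)

/-- Var[log(1−Y)] under Beta(a,b) equals ψ₁(b) − ψ₁(a+b). -/
theorem beta_var_log_one_sub (a b : ℝ) (ha : 0 < a) (hb : 0 < b) :
    ∫ y in Set.Ioo (0:ℝ) 1,
      (Real.log (1 - y) - (digamma b - digamma (a + b))) ^ 2 * betaDensity a b y
      = trigamma b - trigamma (a + b) := by
  rw [integral_sq_sub_mul_betaDensity ha hb, logBetaMoment_two ha hb, logBetaMoment_one ha hb,
    logBetaMoment_zero ha hb]
  field_simp [(beta_pos ha hb).ne']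
  ring
end

section
/- For every μ ∈ (0,1) and ν > 0, the expected ν-score of the mean-precision beta log-likelihood vanishes: ∫₀¹ [ μ·(log(y/(1−y)) − ψ(νμ) + ψ(ν(1−μ))) + log(1−y) − ψ(ν(1−μ)) + ψ(ν) ] · f(y; μ, ν) dy = 0, where f(·; μ, ν) is the Beta(νμ, ν(1−μ)) density. -/
/-!
Put `a = νμ`, `b = ν(1 - μ)`, so `a + b = ν`. The integrand is a constant multiple of
`(μ log y + (1 - μ) log (1 - y) + ψ(ν) - μ ψ(a) - (1 - μ) ψ(b)) y^(a-1) (1-y)^(b-1)`.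
Differentiating `B(a, b) = ∫₀¹ y^(a-1) (1-y)^(b-1) dy` in `a` under the integral sign gives
`∫ log y · y^(a-1) (1-y)^(b-1) = B(a, b) (ψ(a) - ψ(a + b))`, and the substitution `y ↦ 1 - y`
gives the analogous formula for `log (1 - y)`; the digamma terms then cancel.
-/

open MeasureTheory Real Set

open ProbabilityTheory (beta)

noncomputable def betaKernel (a b y : ℝ) : ℝ := y ^ (a - 1) * (1 - y) ^ (b - 1)

lemma betaKernel_one_sub (a b y : ℝ) : betaKernel a b (1 - y) = betaKernel b a y := by
  rw [betaKernel, betaKernel, sub_sub_cancel, mul_comm]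

lemma betaKernel_nonneg (a b : ℝ) {y : ℝ} (hy : y ∈ Ioo 0 1) : 0 ≤ betaKernel a b y :=
  mul_nonneg (rpow_nonneg hy.1.le _) (rpow_nonneg (sub_nonneg.2 hy.2.le) _)

lemma continuousOn_betaKernel (a b : ℝ) : ContinuousOn (betaKernel a b) (Ioo 0 1) :=
  (continuousOn_id.rpow_const fun _ hy => Or.inl hy.1.ne').mul
    ((continuousOn_const.sub continuousOn_id).rpow_const fun _ hy => Or.inl (sub_pos.2 hy.2).ne')

lemma ofReal_betaKernel (a b : ℝ) {y : ℝ} (hy : y ∈ Ioo 0 1) :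
    (betaKernel a b y : ℂ) = (y : ℂ) ^ ((a : ℂ) - 1) * (1 - (y : ℂ)) ^ ((b : ℂ) - 1) := by
  rw [betaKernel, Complex.ofReal_mul, Complex.ofReal_cpow hy.1.le,
    Complex.ofReal_cpow (sub_nonneg.2 hy.2.le)]
  push_cast
  rfl

lemma integrableOn_complex_betaKernel {a b : ℝ} (ha : 0 < a) (hb : 0 < b) :
    IntegrableOn (fun y : ℝ => (y : ℂ) ^ ((a : ℂ) - 1) * (1 - (y : ℂ)) ^ ((b : ℂ) - 1))
      (Ioo 0 1) := by
  have h := Complex.betaIntegral_convergent (u := a) (v := b) (by simpa) (by simpa)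
  rw [intervalIntegrable_iff_integrableOn_Ioc_of_le zero_le_one] at h
  exact h.mono_set Ioo_subset_Ioc_self

lemma integrableOn_betaKernel {a b : ℝ} (ha : 0 < a) (hb : 0 < b) :
    IntegrableOn (betaKernel a b) (Ioo 0 1) := by
  refine IntegrableOn.congr_fun (integrableOn_complex_betaKernel ha hb).re (fun y hy => ?_)
    measurableSet_Ioo
  simp [← ofReal_betaKernel a b hy]

lemma integral_betaKernel {a b : ℝ} (ha : 0 < a) (hb : 0 < b) :
    ∫ y in Ioo 0 1, betaKernel a b y = beta a b := by
  rw [ProbabilityTheory.beta_eq_betaIntegralReal a b ha hb, Complex.betaIntegral,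
    intervalIntegral.integral_of_le zero_le_one, integral_Ioc_eq_integral_Ioo,
    ← RCLike.re_to_complex, ← integral_re (integrableOn_complex_betaKernel ha hb)]
  refine setIntegral_congr_fun measurableSet_Ioo (fun y hy => ?_)
  simp [← ofReal_betaKernel a b hy]

lemma hasDerivAt_Gamma_of_pos_s14 {x : ℝ} (hx : 0 < x) : HasDerivAt Gamma (deriv Gamma x) x :=
  (differentiableAt_Gamma fun m h => (neg_nonpos.2 m.cast_nonneg).not_gt (h ▸ hx)).hasDerivAt

lemma hasDerivAt_beta_fst {a b : ℝ} (ha : 0 < a) (hb : 0 < b) :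
    HasDerivAt (fun x => beta x b) (beta a b * (digamma a - digamma (a + b))) a := by
  have hΓab := (Gamma_pos_of_pos (add_pos ha hb)).ne'
  have hsum : HasDerivAt (fun x => Gamma (x + b)) (deriv Gamma (a + b)) a :=
    (hasDerivAt_Gamma_of_pos_s14 (add_pos ha hb)).comp_add_const a b
  refine (((hasDerivAt_Gamma_of_pos_s14 ha).mul_const (Gamma b)).div hsum hΓab).congr_deriv ?_
  unfold ProbabilityTheory.beta digamma
  field_simp

lemma hasDerivAt_betaKernel_fst (x b : ℝ) {y : ℝ} (hy : 0 < y) :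
    HasDerivAt (fun x => betaKernel x b y) (log y * betaKernel x b y) x := by
  refine (((hasStrictDerivAt_const_rpow hy (x - 1)).hasDerivAt.comp_sub_const x 1).mul_const
    ((1 - y) ^ (b - 1))).congr_deriv ?_
  rw [betaKernel]
  ring

lemma abs_log_mul_rpow_le {y s ε : ℝ} (hy0 : 0 < y) (hy1 : y ≤ 1) (hε : 0 < ε) :
    |log y| * y ^ s ≤ y ^ (s - ε) / ε := by
  have hlog : |log y| ≤ y ^ (-ε) / ε := by
    rw [abs_of_nonpos (log_nonpos hy0.le hy1), ← log_inv, rpow_neg hy0.le, ← inv_rpow hy0.le]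
    exact log_le_rpow_div (inv_nonneg.2 hy0.le) hε
  calc |log y| * y ^ s ≤ y ^ (-ε) / ε * y ^ s := by gcongr
    _ = y ^ (s - ε) / ε := by rw [sub_eq_neg_add, rpow_add hy0]; ring

/-- For `x > a / 2` the factor `y ^ (x - 1)` is at most `y ^ (a / 2 - 1)`, and `|log y|` costs at
most a further `y ^ (-a / 4)`: the dominating function used to differentiate under the integral. -/
lemma norm_log_mul_betaKernel_le {a b x y : ℝ} (ha : 0 < a) (hx : a / 2 < x)
    (hy : y ∈ Ioo 0 1) :
    ‖log y * betaKernel x b y‖ ≤ betaKernel (a / 4) b y / (a / 4) := by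
  have h1y : 0 ≤ (1 - y) ^ (b - 1) := rpow_nonneg (sub_nonneg.2 hy.2.le) _
  rw [norm_mul, norm_of_nonneg (betaKernel_nonneg x b hy), norm_eq_abs, betaKernel, betaKernel,
    ← mul_assoc, mul_div_right_comm]
  refine mul_le_mul_of_nonneg_right ?_ h1y
  calc |log y| * y ^ (x - 1) ≤ |log y| * y ^ (a / 2 - 1) := by
        gcongr ?_ * ?_; exact rpow_le_rpow_of_exponent_ge hy.1 hy.2.le (by linarith)
    _ ≤ y ^ (a / 2 - 1 - a / 4) / (a / 4) := abs_log_mul_rpow_le hy.1 hy.2.le (by positivity)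
    _ = y ^ (a / 4 - 1) / (a / 4) := by ring_nf

lemma hasDerivAt_integral_betaKernel_fst {a b : ℝ} (ha : 0 < a) (hb : 0 < b) :
    IntegrableOn (fun y => log y * betaKernel a b y) (Ioo 0 1) ∧
      HasDerivAt (fun x => ∫ y in Ioo 0 1, betaKernel x b y)
        (∫ y in Ioo 0 1, log y * betaKernel a b y) a := by
  have hball : ∀ x ∈ Metric.ball a (a / 2), a / 2 < x := fun x hx => by
    rw [Metric.mem_ball, Real.dist_eq, abs_lt] at hx; linarith
  have hmeas : ∀ x, AEStronglyMeasurable (betaKernel x b) (volume.restrict (Ioo 0 1)) :=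
    fun x => (continuousOn_betaKernel x b).aestronglyMeasurable measurableSet_Ioo
  have hmeas' : AEStronglyMeasurable (fun y => log y * betaKernel a b y)
      (volume.restrict (Ioo 0 1)) :=
    ((continuousOn_log.mono fun _ hy => hy.1.ne').mul (continuousOn_betaKernel a b))
      |>.aestronglyMeasurable measurableSet_Ioo
  have hbound : ∀ᵐ y ∂volume.restrict (Ioo 0 1), ∀ x ∈ Metric.ball a (a / 2),
      ‖log y * betaKernel x b y‖ ≤ betaKernel (a / 4) b y / (a / 4) :=
    (ae_restrict_iff' measurableSet_Ioo).2 (.of_forall fun y hy x hx =>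
      norm_log_mul_betaKernel_le ha (hball x hx) hy)
  have hderiv : ∀ᵐ y ∂volume.restrict (Ioo 0 1), ∀ x ∈ Metric.ball a (a / 2),
      HasDerivAt (fun x => betaKernel x b y) (log y * betaKernel x b y) x :=
    (ae_restrict_iff' measurableSet_Ioo).2 (.of_forall fun y hy x _ =>
      hasDerivAt_betaKernel_fst x b hy.1)
  exact hasDerivAt_integral_of_dominated_loc_of_deriv_le (Metric.ball_mem_nhds a (by positivity))
    (.of_forall hmeas) (integrableOn_betaKernel ha hb) hmeas' hbound
    ((integrableOn_betaKernel (by positivity) hb).div_const _) hderiv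

lemma integral_log_mul_betaKernel {a b : ℝ} (ha : 0 < a) (hb : 0 < b) :
    ∫ y in Ioo 0 1, log y * betaKernel a b y = beta a b * (digamma a - digamma (a + b)) := by
  have hbeta : (fun x => ∫ y in Ioo 0 1, betaKernel x b y) =ᶠ[nhds a] fun x => beta x b := by
    filter_upwards [eventually_gt_nhds ha] with x hx using integral_betaKernel hx hb
  exact (hasDerivAt_integral_betaKernel_fst ha hb).2.unique
    ((hasDerivAt_beta_fst ha hb).congr_of_eventuallyEq hbeta)

lemma integral_Ioo_zero_one_comp_one_sub {E : Type*} [NormedAddCommGroup E] [NormedSpace ℝ E]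
    (f : ℝ → E) : ∫ y in Ioo 0 1, f (1 - y) = ∫ y in Ioo 0 1, f y := by
  simpa using (volume.measurePreserving_sub_left (1 : ℝ)).setIntegral_preimage_emb
    (MeasurableEquiv.subLeft (1 : ℝ)).measurableEmbedding f (Ioo 0 1)

lemma IntegrableOn.comp_one_sub {E : Type*} [NormedAddCommGroup E] {f : ℝ → E}
    (hf : IntegrableOn f (Ioo 0 1)) : IntegrableOn (fun y => f (1 - y)) (Ioo 0 1) := by
  have h := (volume.measurePreserving_sub_left (1 : ℝ)).integrableOn_comp_preimage
    (MeasurableEquiv.subLeft (1 : ℝ)).measurableEmbedding (f := f) (s := Ioo 0 1)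
  simpa [Function.comp_def] using h.2 hf

lemma integrableOn_log_one_sub_mul_betaKernel {a b : ℝ} (ha : 0 < a) (hb : 0 < b) :
    IntegrableOn (fun y => log (1 - y) * betaKernel a b y) (Ioo 0 1) := by
  simpa [betaKernel_one_sub] using
    IntegrableOn.comp_one_sub (hasDerivAt_integral_betaKernel_fst hb ha).1

lemma integral_log_one_sub_mul_betaKernel {a b : ℝ} (ha : 0 < a) (hb : 0 < b) :
    ∫ y in Ioo 0 1, log (1 - y) * betaKernel a b y =
      beta a b * (digamma b - digamma (a + b)) := by
  have := integral_Ioo_zero_one_comp_one_sub fun y => log y * betaKernel b a y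
  simp only [betaKernel_one_sub] at this
  rw [this, integral_log_mul_betaKernel hb ha, add_comm b a]
  unfold ProbabilityTheory.beta
  rw [add_comm b a, mul_comm (Gamma b)]

lemma integral_log_affine_mul_betaKernel {a b : ℝ} (ha : 0 < a) (hb : 0 < b) (s t r : ℝ) :
    ∫ y in Ioo 0 1, (s * log y + t * log (1 - y) + r) * betaKernel a b y =
      beta a b * (s * (digamma a - digamma (a + b)) + t * (digamma b - digamma (a + b)) + r) := by
  have hlog := (hasDerivAt_integral_betaKernel_fst ha hb).1.const_mul s
  have hlog₁ := (integrableOn_log_one_sub_mul_betaKernel ha hb).const_mul t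
  have hconst := (integrableOn_betaKernel ha hb).const_mul r
  have hlogs : IntegrableOn (fun y => s * (log y * betaKernel a b y) +
      t * (log (1 - y) * betaKernel a b y)) (Ioo 0 1) := hlog.add hlog₁
  simp_rw [add_mul, mul_assoc]
  rw [integral_add hlogs hconst, integral_add hlog hlog₁, integral_const_mul,
    integral_const_mul, integral_const_mul, integral_log_mul_betaKernel ha hb,
    integral_log_one_sub_mul_betaKernel ha hb, integral_betaKernel ha hb]
  ring

/-- the expected ν-score of the mean-precision beta log-likelihood vanishes. -/
theorem expected_nu_score_eq_zero (μ ν : ℝ) (hμ : μ ∈ Set.Ioo (0:ℝ) 1) (hν : 0 < ν) :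
    ∫ y in Set.Ioo (0:ℝ) 1,
      (μ * (Real.log (y / (1 - y)) - digamma (ν * μ) + digamma (ν * (1 - μ)))
          + Real.log (1 - y) - digamma (ν * (1 - μ)) + digamma ν) *
        (Real.Gamma ν / (Real.Gamma (ν * μ) * Real.Gamma (ν * (1 - μ))) *
          y ^ (ν * μ - 1) * (1 - y) ^ (ν * (1 - μ) - 1)) = 0 := by
  obtain ⟨hμ0, hμ1⟩ := hμ
  have ha : 0 < ν * μ := mul_pos hν hμ0
  have hb : 0 < ν * (1 - μ) := mul_pos hν (sub_pos.2 hμ1)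
  have hab : ν * μ + ν * (1 - μ) = ν := by ring
  set c := Gamma ν / (Gamma (ν * μ) * Gamma (ν * (1 - μ)))
  set r := digamma ν - μ * digamma (ν * μ) - (1 - μ) * digamma (ν * (1 - μ))
  have hscore : ∀ y ∈ Ioo (0 : ℝ) 1,
      (μ * (log (y / (1 - y)) - digamma (ν * μ) + digamma (ν * (1 - μ)))
          + log (1 - y) - digamma (ν * (1 - μ)) + digamma ν) *
        (c * y ^ (ν * μ - 1) * (1 - y) ^ (ν * (1 - μ) - 1)) =
      c * ((μ * log y + (1 - μ) * log (1 - y) + r) * betaKernel (ν * μ) (ν * (1 - μ)) y) := by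
    intro y hy
    rw [log_div hy.1.ne' (sub_pos.2 hy.2).ne', betaKernel]
    ring
  rw [setIntegral_congr_fun measurableSet_Ioo hscore, integral_const_mul,
    integral_log_affine_mul_betaKernel ha hb, hab]
  ring
end
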